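/- In minimal first-order logic (connectives → and ∀ only), if a formula φ is derivable from an environment Γ then there exists a proof term in long normal form of type φ in Γ. -/

import Mathlib

/-!
Each rule of natural deduction is admissible for long normal forms. A hypothesis is η-expanded;
the introduction rules are constructors of `Lnf`; ∀-elimination substitutes the object variable
into the body of the λ-abstraction that an lnf of type `∀x.φ` must be; →-elimination is a cut.
Cut is admissible by induction on the cut formula and, inside that, on the lnf derivation:
replacing the cut hypothesis by a λ-abstraction only creates redexes whose cut formulas are
(instances of) proper subformulas of the cut formula, hence of smaller size.
-/

namespace MFOL

/-- Formulas of minimal first-order logic (→ and ∀ only, no function symbols),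
in de Bruijn representation; individual terms are just variables `ℕ`. -/
inductive Form where
  | atom : ℕ → List ℕ → Form
  | imp : Form → Form → Form
  | all : Form → Form
deriving DecidableEq

def upRen (σ : ℕ → ℕ) : ℕ → ℕ
  | 0 => 0
  | n + 1 => σ n + 1

/-- Capture-avoiding (simultaneous) substitution of variables for variables. -/
def substF : (ℕ → ℕ) → Form → Form
  | σ, .atom p args => .atom p (args.map σ)
  | σ, .imp a b => .imp (substF σ a) (substF σ b)
  | σ, .all a => .all (substF (upRen σ) a)

/-- Substitution of the variable `x` for the outermost bound variable. -/
def subst0 (x : ℕ) : Form → Form :=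
  substF (fun n => match n with | 0 => x | n + 1 => n)

def shiftF : Form → Form := substF Nat.succ

/-- Natural deduction for minimal first-order logic. -/
inductive Prv : Set Form → Form → Prop
  | ax {Γ : Set Form} {φ : Form} : φ ∈ Γ → Prv Γ φ
  | impI {Γ : Set Form} {φ ψ : Form} : Prv (insert φ Γ) ψ → Prv Γ (.imp φ ψ)
  | impE {Γ : Set Form} {φ ψ : Form} : Prv Γ (.imp φ ψ) → Prv Γ φ → Prv Γ ψ
  | allI {Γ : Set Form} {φ : Form} : Prv (shiftF '' Γ) φ → Prv Γ (.all φ)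
  | allE {Γ : Set Form} {φ : Form} (x : ℕ) : Prv Γ (.all φ) → Prv Γ (subst0 x φ)

mutual
  /-- The Σ₁ class of the Mints hierarchy: Σ₁ ::= a | Π₁ → Σ₁. -/
  inductive IsSigma1 : Form → Prop
    | atom (p : ℕ) (args : List ℕ) : IsSigma1 (.atom p args)
    | imp {τ σ : Form} : IsPi1 τ → IsSigma1 σ → IsSigma1 (.imp τ σ)
  /-- The Π₁ class of the Mints hierarchy: Π₁ ::= a | Σ₁ → Π₁ | ∀x.Π₁. -/
  inductive IsPi1 : Form → Prop
    | atom (p : ℕ) (args : List ℕ) : IsPi1 (.atom p args)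
    | imp {σ π : Form} : IsSigma1 σ → IsPi1 π → IsPi1 (.imp σ π)
    | all {π : Form} : IsPi1 π → IsPi1 (.all π)
end

def IsAtomF (f : Form) : Prop := ∃ p args, f = Form.atom p args

/-- Premises τ₁,…,τ_q of a Σ₁ formula τ₁ → ⋯ → τ_q → c. -/
def premsOf : Form → List Form
  | .imp a b => a :: premsOf b
  | .atom p args => []
  | .all a => []

/-- Target atom of a Σ₁ formula. -/
def targetOf : Form → Form
  | .imp _ b => targetOf b
  | f => f

/-- `Unfolds ψ prems b` : instantiating the ∀-blocks of the Π₁ formula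
`ψ = ∀ȳ₁(σ₁ → ∀ȳ₂(σ₂ → ⋯ → ∀ȳ_k(σ_k → b')⋯))` at some variables x̄
yields the list of (instantiated) premises `prems = [σ₁[ȳ:=x̄],…]` and
the (instantiated) target atom `b = b'[ȳ:=x̄]`. -/
inductive Unfolds : Form → List Form → Form → Prop
  | atom (p : ℕ) (args : List ℕ) : Unfolds (.atom p args) [] (.atom p args)
  | imp {σ ψ : Form} {prems : List Form} {b : Form} :
      Unfolds ψ prems b → Unfolds (.imp σ ψ) (σ :: prems) b
  | all {ψ : Form} {prems : List Form} {b : Form} (x : ℕ) :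
      Unfolds (subst0 x ψ) prems b → Unfolds (.all ψ) prems b

/-- `closedAt k φ`: all free de Bruijn indices of `φ` are `< k`. -/
def closedAt : ℕ → Form → Prop
  | k, .atom _ args => ∀ x ∈ args, x < k
  | k, .imp a b => closedAt k a ∧ closedAt k b
  | k, .all a => closedAt (k + 1) a

end MFOL

namespace MFOL

/-- Proof terms: proof variables, proof abstraction λX:φ.M, object abstraction
λx.M, proof application MN, object application Mx. -/
inductive Pt where
  | pvar : ℕ → Pt
  | plam : Form → Pt → Pt
  | olam : Pt → Pt
  | papp : Pt → Pt → Pt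
  | oapp : Pt → ℕ → Pt

mutual
  /-- `Lnf Γ N φ`: N is a long normal form of type φ in environment Γ. -/
  inductive Lnf : List Form → Pt → Form → Prop
    | plam {Γ : List Form} {φ ψ : Form} {M : Pt} :
        Lnf (φ :: Γ) M ψ → Lnf Γ (.plam φ M) (.imp φ ψ)
    | olam {Γ : List Form} {φ : Form} {M : Pt} :
        Lnf (Γ.map shiftF) M φ → Lnf Γ (.olam M) (.all φ)
    | head {Γ : List Form} {M : Pt} {p : ℕ} {args : List ℕ} :
        LnfApp Γ M (.atom p args) → Lnf Γ M (.atom p args)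
  /-- Head variable applied to a sequence of lnf proof arguments and object
  variables. -/
  inductive LnfApp : List Form → Pt → Form → Prop
    | var {Γ : List Form} {n : ℕ} {φ : Form} :
        Γ[n]? = some φ → LnfApp Γ (.pvar n) φ
    | papp {Γ : List Form} {M N : Pt} {φ ψ : Form} :
        LnfApp Γ M (.imp φ ψ) → Lnf Γ N φ → LnfApp Γ (.papp M N) ψ
    | oapp {Γ : List Form} {M : Pt} {φ : Form} (x : ℕ) :
        LnfApp Γ M (.all φ) → LnfApp Γ (.oapp M x) (subst0 x φ)
end

end MFOL

namespace MFOL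

theorem upRen_comp (σ τ : ℕ → ℕ) : upRen σ ∘ upRen τ = upRen (σ ∘ τ) := by
  funext n; cases n <;> rfl

theorem upRen_id : upRen id = id := by
  funext n; cases n <;> rfl

theorem substF_substF (σ τ : ℕ → ℕ) : ∀ f, substF σ (substF τ f) = substF (σ ∘ τ) f
  | .atom _ _ => by simp [substF]
  | .imp a b => by simp [substF, substF_substF σ τ a, substF_substF σ τ b]
  | .all a => by simp [substF, substF_substF _ _ a, upRen_comp]

theorem substF_id : ∀ f, substF id f = f
  | .atom _ _ => by simp [substF]
  | .imp a b => by simp [substF, substF_id a, substF_id b]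
  | .all a => by simp [substF, upRen_id, substF_id a]

theorem subst0_shiftF (x : ℕ) (f : Form) : subst0 x (shiftF f) = f := by
  rw [subst0, shiftF, substF_substF]
  exact substF_id f

theorem substF_subst0 (σ : ℕ → ℕ) (x : ℕ) (f : Form) :
    substF σ (subst0 x f) = subst0 (σ x) (substF (upRen σ) f) := by
  simp only [subst0, substF_substF]
  congr 1; funext n; cases n <;> rfl

theorem substF_shiftF (σ : ℕ → ℕ) (f : Form) :
    substF (upRen σ) (shiftF f) = shiftF (substF σ f) := by
  simp only [shiftF, substF_substF]; rfl

theorem subst0_zero_substF_upRen_succ (f : Form) : subst0 0 (substF (upRen Nat.succ) f) = f := by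
  rw [subst0, substF_substF]
  convert substF_id f
  funext n; cases n <;> rfl

def Form.size : Form → ℕ
  | .atom _ _ => 1
  | .imp a b => a.size + b.size + 1
  | .all a => a.size + 1

theorem size_substF (σ : ℕ → ℕ) : ∀ f, (substF σ f).size = f.size
  | .atom _ _ => rfl
  | .imp a b => by simp [substF, Form.size, size_substF σ a, size_substF σ b]
  | .all a => by simp [substF, Form.size, size_substF _ a]

namespace Pt

def rename (ρ : ℕ → ℕ) : Pt → Pt
  | pvar n => pvar (ρ n)
  | plam φ M => plam φ (rename (upRen ρ) M)
  | olam M => olam (rename ρ M)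
  | papp M N => papp (rename ρ M) (rename ρ N)
  | oapp M x => oapp (rename ρ M) x

def osubst (σ : ℕ → ℕ) : Pt → Pt
  | pvar n => pvar n
  | plam φ M => plam (substF σ φ) (osubst σ M)
  | olam M => olam (osubst (upRen σ) M)
  | papp M N => papp (osubst σ M) (osubst σ N)
  | oapp M x => oapp (osubst σ M) (σ x)

end Pt

mutual

theorem Lnf.rename {Γ Δ : List Form} {ρ : ℕ → ℕ}
    (hρ : ∀ k φ, Γ[k]? = some φ → Δ[ρ k]? = some φ) {M : Pt} {ψ : Form} :
    Lnf Γ M ψ → Lnf Δ (M.rename ρ) ψ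
  | .plam h => .plam (h.rename (by rintro (_ | k) φ hk; exacts [hk, hρ k φ hk]))
  | .olam h => .olam (h.rename (by
      intro k φ hk
      obtain ⟨φ', hφ', rfl⟩ := Option.map_eq_some_iff.mp (List.getElem?_map ▸ hk)
      simp [List.getElem?_map, hρ k φ' hφ']))
  | .head h => .head (h.rename hρ)

theorem LnfApp.rename {Γ Δ : List Form} {ρ : ℕ → ℕ}
    (hρ : ∀ k φ, Γ[k]? = some φ → Δ[ρ k]? = some φ) {M : Pt} {ψ : Form} :
    LnfApp Γ M ψ → LnfApp Δ (M.rename ρ) ψ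
  | .var h => .var (hρ _ _ h)
  | .papp hM hN => .papp (hM.rename hρ) (hN.rename hρ)
  | .oapp x h => .oapp x (h.rename hρ)

end

theorem map_substF_map_shiftF (σ : ℕ → ℕ) (Γ : List Form) :
    (Γ.map shiftF).map (substF (upRen σ)) = (Γ.map (substF σ)).map shiftF := by
  simp only [List.map_map]
  exact List.map_congr_left fun f _ => substF_shiftF σ f

mutual

theorem Lnf.osubst (σ : ℕ → ℕ) {Γ : List Form} {M : Pt} {ψ : Form} :
    Lnf Γ M ψ → Lnf (Γ.map (substF σ)) (M.osubst σ) (substF σ ψ)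
  | .plam h => .plam (h.osubst σ)
  | .olam h => .olam (map_substF_map_shiftF σ _ ▸ h.osubst (upRen σ))
  | .head h => .head (h.osubst σ)

theorem LnfApp.osubst (σ : ℕ → ℕ) {Γ : List Form} {M : Pt} {ψ : Form} :
    LnfApp Γ M ψ → LnfApp (Γ.map (substF σ)) (M.osubst σ) (substF σ ψ)
  | .var h => .var (by rw [List.getElem?_map, h]; rfl)
  | .papp hM hN => .papp (hM.osubst σ) (hN.osubst σ)
  | .oapp x h => substF_subst0 σ x _ ▸ .oapp (σ x) (h.osubst σ)

end

def Pt.eta : Form → Pt → Pt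
  | .atom _ _, M => M
  | .imp φ ψ, M => .plam φ (eta ψ (.papp (M.rename Nat.succ) (eta φ (.pvar 0))))
  | .all φ, M => .olam (eta φ (.oapp (M.osubst Nat.succ) 0))

theorem LnfApp.eta : ∀ {φ : Form} {Γ : List Form} {M : Pt}, LnfApp Γ M φ → Lnf Γ (M.eta φ) φ
  | .atom _ _, _, _, h => .head h
  | .imp _ _, _, _, h =>
    have h' := h.rename (Δ := _ :: _) (ρ := Nat.succ) fun _ _ hk => hk
    .plam (LnfApp.eta (.papp h' (LnfApp.eta (.var rfl))))
  | .all φ, _, _, h => by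
    have h' := LnfApp.oapp 0 (h.osubst Nat.succ)
    rw [subst0_zero_substF_upRen_succ] at h'
    exact .olam (LnfApp.eta h')

theorem Lnf.oapp {Γ : List Form} {M : Pt} {ψ : Form} (h : Lnf Γ M (.all ψ)) (x : ℕ) :
    ∃ N, Lnf Γ N (subst0 x ψ) := by
  obtain _ | ⟨hM⟩ := h
  have hM' : Lnf ((Γ.map shiftF).map (subst0 x)) _ (subst0 x ψ) := hM.osubst _
  rw [List.map_map, (funext (subst0_shiftF x) : subst0 x ∘ shiftF = id), List.map_id] at hM'
  exact ⟨_, hM'⟩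

def CutAdmissible (φ : Form) : Prop :=
  ∀ ⦃Γ : List Form⦄ ⦃i : ℕ⦄ ⦃M P : Pt⦄ ⦃ψ : Form⦄, Γ[i]? = some φ → Lnf Γ M ψ →
    Lnf (Γ.eraseIdx i) P φ → ∃ N, Lnf (Γ.eraseIdx i) N ψ

theorem Lnf.papp {Γ : List Form} {M P : Pt} {φ ψ : Form} (hφ : CutAdmissible φ)
    (hM : Lnf Γ M (.imp φ ψ)) (hP : Lnf Γ P φ) : ∃ N, Lnf Γ N ψ := by
  obtain ⟨hB⟩ | _ := hM
  exact hφ (i := 0) rfl hB hP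

mutual

theorem Lnf.cut_of_cutAdmissible_lt {φ : Form}
    (hcut : ∀ α : Form, α.size < φ.size → CutAdmissible α)
    {Γ : List Form} {i : ℕ} {M P : Pt} {ψ : Form} (hφ : Γ[i]? = some φ) :
    Lnf Γ M ψ → Lnf (Γ.eraseIdx i) P φ → ∃ N, Lnf (Γ.eraseIdx i) N ψ
  | .plam (φ := α) hM, hP => by
    obtain ⟨N, hN⟩ := hM.cut_of_cutAdmissible_lt hcut (i := i + 1) hφ
      (hP.rename (ρ := Nat.succ) fun _ _ hk => hk)
    exact ⟨.plam α N, .plam hN⟩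
  | .olam hM, hP => by
    have hcut' : ∀ α : Form, α.size < (shiftF φ).size → CutAdmissible α := by
      rwa [shiftF, size_substF]
    obtain ⟨N, hN⟩ := hM.cut_of_cutAdmissible_lt hcut' (i := i)
      (by rw [List.getElem?_map, hφ]; rfl) (by rw [List.eraseIdx_map]; exact hP.osubst _)
    rw [List.eraseIdx_map] at hN
    exact ⟨.olam N, .olam hN⟩
  | .head hM, hP => by
    obtain ⟨N, hN⟩ | ⟨hN, -⟩ := hM.cut_of_cutAdmissible_lt hcut hφ hP
    exacts [⟨N, .head hN⟩, hN]

/- The right disjunct is the case where the head of the spine is the cut hypothesis itself: its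
size bound makes every β-redex the spine's arguments then create a cut on a smaller formula. -/
theorem LnfApp.cut_of_cutAdmissible_lt {φ : Form}
    (hcut : ∀ α : Form, α.size < φ.size → CutAdmissible α)
    {Γ : List Form} {i : ℕ} {M P : Pt} {ψ : Form} (hφ : Γ[i]? = some φ) :
    LnfApp Γ M ψ → Lnf (Γ.eraseIdx i) P φ →
      (∃ N, LnfApp (Γ.eraseIdx i) N ψ) ∨ (∃ N, Lnf (Γ.eraseIdx i) N ψ) ∧ ψ.size ≤ φ.size
  | .var (n := k) hk, hP => by
    rcases lt_trichotomy k i with hki | rfl | hik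
    · exact .inl ⟨.pvar k, .var (by rw [List.getElem?_eraseIdx, if_pos hki, hk])⟩
    · obtain rfl : ψ = φ := Option.some_injective _ (hk.symm.trans hφ)
      exact .inr ⟨⟨P, hP⟩, le_rfl⟩
    · refine .inl ⟨.pvar (k - 1), .var ?_⟩
      rw [List.getElem?_eraseIdx, if_neg (by omega), Nat.sub_add_cancel (by omega), hk]
  | .papp (φ := α) hM hN, hP => by
    obtain ⟨N, hN⟩ := hN.cut_of_cutAdmissible_lt hcut hφ hP
    obtain ⟨M, hM⟩ | ⟨⟨M, hM⟩, hsize⟩ := hM.cut_of_cutAdmissible_lt hcut hφ hP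
    · exact .inl ⟨.papp M N, .papp hM hN⟩
    · simp only [Form.size] at hsize
      exact .inr ⟨hM.papp (hcut α (by omega)) hN, by omega⟩
  | .oapp x hM, hP => by
    obtain ⟨M, hM⟩ | ⟨⟨M, hM⟩, hsize⟩ := hM.cut_of_cutAdmissible_lt hcut hφ hP
    · exact .inl ⟨.oapp M x, .oapp x hM⟩
    · simp only [Form.size] at hsize
      exact .inr ⟨hM.oapp x, by rw [subst0, size_substF]; omega⟩

end

theorem cutAdmissible (φ : Form) : CutAdmissible φ :=
  fun _ _ _ _ _ hφ hM hP =>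
    hM.cut_of_cutAdmissible_lt (fun α _ => cutAdmissible α) hφ hP
termination_by φ.size

theorem Prv.exists_lnf {S : Set Form} {φ : Form} (h : Prv S φ) {Γ : List Form}
    (hΓ : S ⊆ {ψ | ψ ∈ Γ}) : ∃ N, Lnf Γ N φ := by
  induction h generalizing Γ with
  | ax hφ =>
    obtain ⟨k, hk⟩ := List.mem_iff_getElem?.mp (hΓ hφ)
    exact ⟨_, (LnfApp.var hk).eta⟩
  | @impI _ φ _ _ ih =>
    obtain ⟨N, hN⟩ := ih (Γ := φ :: Γ) (Set.insert_subset_iff.mpr ⟨List.mem_cons_self, fun ψ hψ =>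
      List.mem_cons_of_mem _ (hΓ hψ)⟩)
    exact ⟨_, .plam hN⟩
  | impE _ _ ihM ihN =>
    obtain ⟨M, hM⟩ := ihM hΓ
    obtain ⟨N, hN⟩ := ihN hΓ
    exact hM.papp (cutAdmissible _) hN
  | allI _ ih =>
    obtain ⟨N, hN⟩ := ih (Γ := Γ.map shiftF) (Set.image_subset_iff.mpr fun ψ hψ =>
      List.mem_map_of_mem (hΓ hψ))
    exact ⟨_, .olam hN⟩
  | allE x _ ih =>
    obtain ⟨M, hM⟩ := ih hΓ
    exact hM.oapp x

end MFOL

/-- If φ is derivable from Γ in minimal first-order logic then some proof term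
in long normal form has type φ in Γ. -/
theorem stmt4 (Γ : List MFOL.Form) (φ : MFOL.Form)
    (h : MFOL.Prv {ψ | ψ ∈ Γ} φ) : ∃ N : MFOL.Pt, MFOL.Lnf Γ N φ :=
  h.exists_lnf subset_rfl
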